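/- Let b(t) be a differentiable invertible matrix-valued function satisfying b' = b·m + a·b + (1/(2W))((bᵀ)⁻¹ − b/(1 − ‖b‖²/l²)) where ‖b‖² = tr(bᵀb), a(t) is antisymmetric, W > 0, l > 0, and tr(bᵀb) < l² for all t. Then c = bᵀb satisfies c' = c·m + mᵀ·c + (1/W)(I − c/(1 − tr(c)/l²)). -/

import Mathlib

/-!
Write `D` for the prescribed derivative of `b`. Entrywise, the derivative of `c = bᵀ b` is
`Dᵀ b + bᵀ D`. In this symmetrised product the rotational term `a b` cancels because `a` is
antisymmetric, and the term `(bᵀ)⁻¹` contributes `b⁻¹ b + bᵀ (bᵀ)⁻¹ = 2`, which turns the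
dumbbell force `(bᵀ)⁻¹ - b / (1 - ‖b‖²/l²)` into `2 (1 - c / (1 - tr c / l²))`.
-/

open Matrix

namespace Matrix

theorem hasDerivAt_mul_apply {𝕜 : Type*} [NontriviallyNormedField 𝕜] {ι κ ν : Type*}
    [Fintype κ] {A : 𝕜 → Matrix ι κ 𝕜} {B : 𝕜 → Matrix κ ν 𝕜} {A' : Matrix ι κ 𝕜}
    {B' : Matrix κ ν 𝕜} {t : 𝕜} (hA : ∀ i k, HasDerivAt (fun s => A s i k) (A' i k) t)
    (hB : ∀ k j, HasDerivAt (fun s => B s k j) (B' k j) t) (i : ι) (j : ν) :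
    HasDerivAt (fun s => (A s * B s) i j) ((A' * B t + A t * B') i j) t := by
  simp only [add_apply, mul_apply, ← Finset.sum_add_distrib]
  exact HasDerivAt.fun_sum fun k _ => (hA i k).mul (hB k j)

variable {R : Type*} [CommRing R] {ι : Type*} [Fintype ι]

theorem transpose_mul_add_transpose_mul_of_transpose_eq_neg {a : Matrix ι ι R}
    (ha : aᵀ = -a) (b : Matrix ι ι R) : (a * b)ᵀ * b + bᵀ * (a * b) = 0 := by
  rw [transpose_mul, ha, Matrix.mul_neg, Matrix.neg_mul, ← Matrix.mul_assoc, neg_add_cancel]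

variable [DecidableEq ι]

theorem transpose_inv_transpose_mul_add_mul_inv_transpose {b : Matrix ι ι R}
    (hb : IsUnit b.det) : ((bᵀ)⁻¹)ᵀ * b + bᵀ * (bᵀ)⁻¹ = 2 := by
  rw [transpose_nonsing_inv, transpose_transpose, nonsing_inv_mul _ hb,
    mul_nonsing_inv _ (by rwa [det_transpose]), one_add_one_eq_two]

theorem transpose_mul_add_transpose_mul_fenep {a b m : Matrix ι ι R} (ha : aᵀ = -a)
    (hb : IsUnit b.det) (c μ : R) :
    let D := b * m + a * b + c • ((bᵀ)⁻¹ - μ • b)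
    Dᵀ * b + bᵀ * D = bᵀ * b * m + mᵀ * (bᵀ * b) + (2 * c) • (1 - μ • (bᵀ * b)) := by
  have hskew := transpose_mul_add_transpose_mul_of_transpose_eq_neg ha b
  have hinv : ((bᵀ)⁻¹)ᵀ * b + bᵀ * (bᵀ)⁻¹ = (2 : R) • (1 : Matrix ι ι R) := by
    rw [two_smul, one_add_one_eq_two, transpose_inv_transpose_mul_add_mul_inv_transpose hb]
  have hsymm : (b * m)ᵀ * b + bᵀ * (b * m) = bᵀ * b * m + mᵀ * (bᵀ * b) := by
    rw [transpose_mul, Matrix.mul_assoc, Matrix.mul_assoc, add_comm]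
  simp only [transpose_add, transpose_smul, transpose_sub, Matrix.add_mul, Matrix.mul_add,
    Matrix.sub_mul, Matrix.mul_sub, Matrix.smul_mul, Matrix.mul_smul]
  linear_combination (norm := module) hsymm + hskew + c • hinv

end Matrix

theorem stmt_8_general (n : ℕ) (b m a : ℝ → Matrix (Fin n) (Fin n) ℝ) (W l : ℝ)
    (hanti : ∀ t, (a t)ᵀ = -(a t))
    (hinv : ∀ t, IsUnit (b t).det)
    (hder : ∀ t (i j : Fin n), HasDerivAt (fun s => b s i j)
      ((b t * m t + a t * b t + (2 * W)⁻¹ • (((b t)ᵀ)⁻¹ -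
        (1 - ((b t)ᵀ * b t).trace / l ^ 2)⁻¹ • b t)) i j) t) :
    ∀ t (i j : Fin n), HasDerivAt (fun s => ((b s)ᵀ * b s) i j)
      (((b t)ᵀ * b t * m t + (m t)ᵀ * ((b t)ᵀ * b t) +
        W⁻¹ • ((1 : Matrix (Fin n) (Fin n) ℝ) -
          (1 - ((b t)ᵀ * b t).trace / l ^ 2)⁻¹ • ((b t)ᵀ * b t))) i j) t := by
  intro t i j
  set D := b t * m t + a t * b t + (2 * W)⁻¹ • (((b t)ᵀ)⁻¹ -
    (1 - ((b t)ᵀ * b t).trace / l ^ 2)⁻¹ • b t)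
  have hgram := hasDerivAt_mul_apply (A := fun s => (b s)ᵀ) (A' := Dᵀ)
    (fun i k => hder t k i) (hder t) i j
  have htwo : 2 * (2 * W)⁻¹ = W⁻¹ := by
    rw [mul_inv, ← mul_assoc, mul_inv_cancel₀ two_ne_zero, one_mul]
  rwa [transpose_mul_add_transpose_mul_fenep (hanti t) (hinv t), htwo] at hgram

theorem stmt_8 (n : ℕ) (b m a : ℝ → Matrix (Fin n) (Fin n) ℝ) (W l : ℝ)
    (hW : 0 < W) (hl : 0 < l)
    (hanti : ∀ t, (a t)ᵀ = -(a t))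
    (hinv : ∀ t, IsUnit (b t).det)
    (hlen : ∀ t, ((b t)ᵀ * b t).trace < l ^ 2)
    (hder : ∀ t (i j : Fin n), HasDerivAt (fun s => b s i j)
      ((b t * m t + a t * b t + (2 * W)⁻¹ • (((b t)ᵀ)⁻¹ -
        (1 - ((b t)ᵀ * b t).trace / l ^ 2)⁻¹ • b t)) i j) t) :
    ∀ t (i j : Fin n), HasDerivAt (fun s => ((b s)ᵀ * b s) i j)
      (((b t)ᵀ * b t * m t + (m t)ᵀ * ((b t)ᵀ * b t) +
        W⁻¹ • ((1 : Matrix (Fin n) (Fin n) ℝ) -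
          (1 - ((b t)ᵀ * b t).trace / l ^ 2)⁻¹ • ((b t)ᵀ * b t))) i j) t :=
  stmt_8_general n b m a W l hanti hinv hder
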